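/- Let P ∈ Sp(1,1) with substantial right eigenvalues λ₁, λ₂. Then exactly one of the following holds: (i) λ₁ = λ₂ = ±1; (ii) {λ₁, λ₂} = {1, -1}; (iii) {λ₁, λ₂} = {r, 1/r} for some real r ∉ {-1, 0, 1}; (iv) one of λ₁, λ₂ is ±1 and the other is e^{iθ} with θ ∈ (0,π); (v) λ₁ = λ₂ = e^{iθ} with θ ∈ (0,π); (vi) λ₁ = e^{iθ₁}, λ₂ = e^{iθ₂} with distinct θ₁, θ₂ ∈ (0,π); (vii) λ₁ = r e^{iθ}, λ₂ = (1/r) e^{iθ} for some r > 0, r ≠ 1, and θ ∈ (0,π). -/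

import Mathlib

noncomputable section
open Matrix Polynomial

abbrev Hq := Quaternion ℝ

def toH (z : ℂ) : Hq := ⟨z.re, z.im, 0, 0⟩

def toC1 (q : Hq) : ℂ := ⟨q.re, q.imI⟩
def toC2 (q : Hq) : ℂ := ⟨q.imJ, q.imK⟩

def chi {m : ℕ} (P : Matrix (Fin m) (Fin m) Hq) :
    Matrix (Fin m ⊕ Fin m) (Fin m ⊕ Fin m) ℂ :=
  Matrix.fromBlocks (P.map toC1) (P.map toC2)
    (-(P.map fun q => star (toC2 q))) (P.map fun q => star (toC1 q))

def Jmat : Matrix (Fin 2) (Fin 2) Hq := !![1, 0; 0, -1]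

/-- `P ∈ Sp(1,1)` iff `Pᴴ J P = J`. -/
def InSp (P : Matrix (Fin 2) (Fin 2) Hq) : Prop := Pᴴ * Jmat * P = Jmat

/-- The signature (1,1) Hermitian form `⟨X, Y⟩ = Xᴴ J Y` on ℍ². -/
def herm (X Y : Fin 2 → Hq) : Hq := star (X 0) * Y 0 - star (X 1) * Y 1

/-!
Since `χ` is multiplicative and commutes with conjugate transposition, `A = χ(P)` preserves the
nondegenerate Hermitian form `χ(J)`: `Aᴴ χ(J) A = χ(J)`. Hence `A` is invertible and its spectrum is
stable under the inversion `μ ↦ (conj μ)⁻¹` in the unit circle. This inversion maps the closed upper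
half plane to itself, so it sends each of `λ₁, λ₂` to `λ₁` or `λ₂`: either it fixes both, i.e.
`|λ₁| = |λ₂| = 1` (cases (i), (ii), (iv)–(vi)), or `λ₂ = λ₁ / |λ₁|²` (cases (iii), (vii)).
The case is determined by which of `λ₁, λ₂` are real, whether `|λ₁| = 1` and whether `λ₁ = λ₂`,
so at most one case holds.
-/

open scoped Quaternion
open ComplexConjugate Set

lemma toC1_add (a b : Hq) : toC1 (a + b) = toC1 a + toC1 b := by
  apply Complex.ext <;> simp [toC1]

lemma toC2_add (a b : Hq) : toC2 (a + b) = toC2 a + toC2 b := by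
  apply Complex.ext <;> simp [toC2]

lemma toC1_sum {ι : Type*} (s : Finset ι) (f : ι → Hq) :
    toC1 (∑ i ∈ s, f i) = ∑ i ∈ s, toC1 (f i) :=
  map_sum (AddMonoidHom.mk' toC1 toC1_add) f s

lemma toC2_sum {ι : Type*} (s : Finset ι) (f : ι → Hq) :
    toC2 (∑ i ∈ s, f i) = ∑ i ∈ s, toC2 (f i) :=
  map_sum (AddMonoidHom.mk' toC2 toC2_add) f s

lemma toC1_mul (a b : Hq) : toC1 (a * b) = toC1 a * toC1 b - toC2 a * star (toC2 b) := by
  apply Complex.ext <;> simp [toC1, toC2, Quaternion.re_mul, Quaternion.imI_mul] <;> ring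

lemma toC2_mul (a b : Hq) : toC2 (a * b) = toC1 a * toC2 b + toC2 a * star (toC1 b) := by
  apply Complex.ext <;> simp [toC1, toC2, Quaternion.imJ_mul, Quaternion.imK_mul] <;> ring

lemma toC1_star (a : Hq) : toC1 (star a) = star (toC1 a) := by
  apply Complex.ext <;> simp [toC1]

lemma toC2_star (a : Hq) : toC2 (star a) = -toC2 a := by
  apply Complex.ext <;> simp [toC2]

lemma chi_mul {m : ℕ} (P Q : Matrix (Fin m) (Fin m) Hq) : chi (P * Q) = chi P * chi Q := by
  simp only [chi, fromBlocks_multiply]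
  congr 1 <;> ext i j <;>
    simp [Matrix.mul_apply, toC1_sum, toC2_sum, toC1_mul, toC2_mul,
      sub_eq_add_neg, Finset.sum_add_distrib, add_comm]

lemma chi_conjTranspose {m : ℕ} (P : Matrix (Fin m) (Fin m) Hq) : chi Pᴴ = (chi P)ᴴ := by
  simp only [chi, fromBlocks_conjTranspose]
  congr 1 <;> ext i j <;> simp [toC1_star, toC2_star]

lemma det_chi_Jmat : (chi Jmat).det = 1 := by
  have h2 : Jmat.map toC2 = 0 := by
    ext i j; fin_cases i <;> fin_cases j <;> simp [Jmat, toC2, Complex.ext_iff]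
  rw [chi, h2, det_fromBlocks_zero₁₂]
  simp [Jmat, toC1, Matrix.det_fin_two, Complex.ext_iff]

section FormPreserving

variable {n : Type*} [Fintype n] [DecidableEq n] {A H : Matrix n n ℂ}

lemma det_ne_zero_of_conjTranspose_mul_mul_eq (hH : H.det ≠ 0) (hA : Aᴴ * H * A = H) :
    A.det ≠ 0 := by
  intro h
  apply hH
  rw [← hA, det_mul, h, mul_zero]

lemma charpoly_not_isRoot_zero (hH : H.det ≠ 0) (hA : Aᴴ * H * A = H) :
    ¬ A.charpoly.IsRoot 0 := by
  rw [IsRoot.def, eval_charpoly, map_zero, zero_sub, det_neg]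
  exact mul_ne_zero (pow_ne_zero _ (neg_ne_zero.2 one_ne_zero))
    (det_ne_zero_of_conjTranspose_mul_mul_eq hH hA)

theorem charpoly_isRoot_inv_conj (hH : H.det ≠ 0) (hA : Aᴴ * H * A = H) {μ : ℂ}
    (hμ : A.charpoly.IsRoot μ) : A.charpoly.IsRoot (conj μ)⁻¹ := by
  rcases eq_or_ne μ 0 with rfl | hμ0
  · simpa using hμ
  set ν := (conj μ)⁻¹
  have hνμ : ν * star μ = 1 := inv_mul_cancel₀ (star_ne_zero.2 hμ0)
  have key : Aᴴ * H * (ν • 1 - A) = -ν • ((μ • 1 - A)ᴴ * H) := by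
    rw [Matrix.mul_sub, hA, conjTranspose_sub, conjTranspose_smul, conjTranspose_one,
      Matrix.sub_mul, smul_sub, Matrix.mul_smul, Matrix.mul_one, Matrix.smul_mul, Matrix.one_mul,
      smul_smul, neg_mul, hνμ, neg_smul, one_smul, neg_smul]
    abel
  simp only [IsRoot.def, eval_charpoly, scalar_apply, ← smul_one_eq_diagonal] at hμ ⊢
  have hdet := congrArg det key
  rw [det_mul, det_mul, det_smul, det_mul, det_conjTranspose, det_conjTranspose, hμ, star_zero,
    zero_mul, mul_zero] at hdet
  refine (mul_eq_zero.1 hdet).resolve_left (mul_ne_zero ?_ hH)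
  exact star_ne_zero.2 (det_ne_zero_of_conjTranspose_mul_mul_eq hH hA)

end FormPreserving

namespace Complex

lemma injOn_exp_mul_I : InjOn (fun θ : ℝ => exp (θ * I)) (Ioo 0 Real.pi) := by
  intro θ₁ hθ₁ θ₂ hθ₂ h
  have hre := congrArg re h
  simp only [exp_ofReal_mul_I_re] at hre
  exact Real.injOn_cos (Ioo_subset_Icc_self hθ₁) (Ioo_subset_Icc_self hθ₂) hre

lemma arg_mem_Ioo_of_im_pos {z : ℂ} (hz : 0 < z.im) : z.arg ∈ Ioo 0 Real.pi :=
  ⟨(arg_nonneg_iff.2 hz.le).lt_of_ne (fun h => hz.ne' (arg_eq_zero_iff.1 h.symm).2),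
    arg_lt_pi_iff.2 (Or.inr hz.ne')⟩

lemma inv_conj_eq_self_iff {z : ℂ} (hz : z ≠ 0) : (conj z)⁻¹ = z ↔ ‖z‖ = 1 := by
  rw [inv_eq_iff_eq_inv, ← mul_eq_one_iff_eq_inv₀ hz, conj_mul', ← ofReal_pow, ofReal_eq_one,
    pow_eq_one_iff_of_nonneg (norm_nonneg z) two_ne_zero]

lemma im_inv_conj_nonneg {z : ℂ} (hz : 0 ≤ z.im) : 0 ≤ ((conj z)⁻¹).im := by
  rw [inv_im, conj_im, neg_neg, normSq_conj]
  exact div_nonneg hz (normSq_nonneg z)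

lemma eq_one_or_eq_neg_one_or_eq_exp {z : ℂ} (hn : ‖z‖ = 1) (him : 0 ≤ z.im) :
    z = 1 ∨ z = -1 ∨ ∃ θ ∈ Ioo 0 Real.pi, z = exp (θ * I) := by
  rcases him.eq_or_lt with him | him
  · have hz : z = (z.re : ℂ) := ext rfl (by simp [← him])
    rw [hz, norm_real, Real.norm_eq_abs] at hn
    rcases abs_eq zero_le_one |>.1 hn with h | h
    · exact Or.inl (by rw [hz, h, ofReal_one])
    · exact Or.inr (Or.inl (by rw [hz, h, ofReal_neg, ofReal_one]))
  · refine Or.inr (Or.inr ⟨z.arg, arg_mem_Ioo_of_im_pos him, ?_⟩)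
    simpa [hn] using (norm_mul_exp_arg_mul_I z).symm

end Complex

open Complex

section Classification

/-- `SpCase l1 l2 k` is case `k + 1` of the classification, numbered `(i)`–`(vii)`. -/
def SpCase (l1 l2 : ℂ) : Fin 7 → Prop :=
  ![l1 = l2 ∧ (l1 = 1 ∨ l1 = -1),
    (l1 = 1 ∧ l2 = -1) ∨ (l1 = -1 ∧ l2 = 1),
    ∃ r : ℝ, r ≠ -1 ∧ r ≠ 0 ∧ r ≠ 1 ∧ ((l1 = r ∧ l2 = (r : ℂ)⁻¹) ∨ (l1 = (r : ℂ)⁻¹ ∧ l2 = r)),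
    ∃ θ : ℝ, θ ∈ Ioo 0 Real.pi ∧
      (((l1 = 1 ∨ l1 = -1) ∧ l2 = exp (θ * I)) ∨ ((l2 = 1 ∨ l2 = -1) ∧ l1 = exp (θ * I))),
    ∃ θ : ℝ, θ ∈ Ioo 0 Real.pi ∧ l1 = exp (θ * I) ∧ l2 = exp (θ * I),
    ∃ θ₁ θ₂ : ℝ, θ₁ ∈ Ioo 0 Real.pi ∧ θ₂ ∈ Ioo 0 Real.pi ∧ θ₁ ≠ θ₂ ∧
      l1 = exp (θ₁ * I) ∧ l2 = exp (θ₂ * I),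
    ∃ r θ : ℝ, 0 < r ∧ r ≠ 1 ∧ θ ∈ Ioo 0 Real.pi ∧
      ((l1 = r * exp (θ * I) ∧ l2 = (r : ℂ)⁻¹ * exp (θ * I)) ∨
        (l1 = (r : ℂ)⁻¹ * exp (θ * I) ∧ l2 = r * exp (θ * I)))]

variable {l1 l2 : ℂ}

lemma exists_spCase_of_norm_eq_one (h1 : 0 ≤ l1.im) (h2 : 0 ≤ l2.im) (hn1 : ‖l1‖ = 1)
    (hn2 : ‖l2‖ = 1) : ∃ n, SpCase l1 l2 n := by
  rcases eq_one_or_eq_neg_one_or_eq_exp hn1 h1 with rfl | rfl | ⟨θ₁, hθ₁, rfl⟩ <;>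
  rcases eq_one_or_eq_neg_one_or_eq_exp hn2 h2 with rfl | rfl | ⟨θ₂, hθ₂, rfl⟩
  · exact ⟨0, by simp [SpCase]⟩
  · exact ⟨1, by simp [SpCase]⟩
  · exact ⟨3, θ₂, hθ₂, by simp⟩
  · exact ⟨1, by simp [SpCase]⟩
  · exact ⟨0, by simp [SpCase]⟩
  · exact ⟨3, θ₂, hθ₂, by simp⟩
  · exact ⟨3, θ₁, hθ₁, by simp⟩
  · exact ⟨3, θ₁, hθ₁, by simp⟩
  · rcases eq_or_ne θ₁ θ₂ with rfl | hne
    · exact ⟨4, θ₁, hθ₁, rfl, rfl⟩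
    · exact ⟨5, θ₁, θ₂, hθ₁, hθ₂, hne, rfl, rfl⟩

lemma exists_spCase_of_eq_inv_conj (h1 : 0 ≤ l1.im) (hl1 : l1 ≠ 0) (hn1 : ‖l1‖ ≠ 1)
    (hl2 : l2 = (conj l1)⁻¹) : ∃ n, SpCase l1 l2 n := by
  rcases h1.eq_or_lt with him | him
  · set r := l1.re
    have hl1r : l1 = r := ext rfl (by simp [← him])
    rw [hl1r, norm_real, Real.norm_eq_abs] at hn1
    refine ⟨2, r, fun h => hn1 (by simp [h]), fun h => hl1 (by simp [hl1r, h]),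
      fun h => hn1 (by simp [h]), Or.inl ⟨hl1r, ?_⟩⟩
    rw [hl2, hl1r, conj_ofReal]
  · have hpolar := norm_mul_exp_arg_mul_I l1
    refine ⟨6, ‖l1‖, l1.arg, norm_pos_iff.2 hl1, hn1, arg_mem_Ioo_of_im_pos him,
      Or.inl ⟨hpolar.symm, ?_⟩⟩
    rw [hl2, inv_def, conj_conj, normSq_conj, normSq_eq_norm_sq]
    nth_rewrite 1 [← hpolar]
    have : (‖l1‖ : ℂ) ≠ 0 := ofReal_ne_zero.2 (norm_ne_zero_iff.2 hl1)
    push_cast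
    field_simp

lemma exists_spCase (h1 : 0 ≤ l1.im) (h2 : 0 ≤ l2.im) (hl1 : l1 ≠ 0) (hl2 : l2 ≠ 0)
    (hι1 : (conj l1)⁻¹ = l1 ∨ (conj l1)⁻¹ = l2) (hι2 : (conj l2)⁻¹ = l1 ∨ (conj l2)⁻¹ = l2) :
    ∃ n, SpCase l1 l2 n := by
  by_cases hn1 : ‖l1‖ = 1
  · have hfix1 := (inv_conj_eq_self_iff hl1).2 hn1
    refine exists_spCase_of_norm_eq_one h1 h2 hn1 ?_
    rcases hι2 with h | h
    · rw [← inv_conj_eq_self_iff hl2, h, ← hfix1, ← h, map_inv₀, conj_conj, inv_inv]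
    · exact (inv_conj_eq_self_iff hl2).1 h
  · refine exists_spCase_of_eq_inv_conj h1 hl1 hn1 (hι1.resolve_left ?_).symm
    rwa [inv_conj_eq_self_iff hl1]

open Classical in
def caseIndex (l1 l2 : ℂ) : Fin 7 :=
  if 0 < l1.im ∧ 0 < l2.im then (if ‖l1‖ = 1 then (if l1 = l2 then 4 else 5) else 6)
  else if 0 < l1.im ∨ 0 < l2.im then 3
  else if ‖l1‖ = 1 then (if l1 = l2 then 0 else 1) else 2

lemma caseIndex_eq_of_spCase {i : Fin 7} (h : SpCase l1 l2 i) : caseIndex l1 l2 = i := by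
  fin_cases i
  · obtain ⟨rfl, rfl | rfl⟩ := h <;> simp [caseIndex]
  · obtain ⟨rfl, rfl⟩ | ⟨rfl, rfl⟩ := h <;> norm_num [caseIndex]
  · obtain ⟨r, hr1, -, hr1', ⟨rfl, rfl⟩ | ⟨rfl, rfl⟩⟩ := h <;>
      simp [caseIndex, abs_eq zero_le_one, hr1, hr1']
  · obtain ⟨θ, hθ, ⟨rfl | rfl, rfl⟩ | ⟨rfl | rfl, rfl⟩⟩ := h <;>
      simp [caseIndex, Real.sin_pos_of_pos_of_lt_pi hθ.1 hθ.2]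
  · obtain ⟨θ, hθ, rfl, rfl⟩ := h
    simp [caseIndex, Real.sin_pos_of_pos_of_lt_pi hθ.1 hθ.2]
  · obtain ⟨θ₁, θ₂, hθ₁, hθ₂, hne, rfl, rfl⟩ := h
    simp [caseIndex, Real.sin_pos_of_pos_of_lt_pi hθ₁.1 hθ₁.2,
      Real.sin_pos_of_pos_of_lt_pi hθ₂.1 hθ₂.2, injOn_exp_mul_I.ne hθ₁ hθ₂ hne]
  · obtain ⟨r, θ, hr, hr1, hθ, ⟨rfl, rfl⟩ | ⟨rfl, rfl⟩⟩ := h <;>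
      simp [caseIndex, Real.sin_pos_of_pos_of_lt_pi hθ.1 hθ.2, hr, hr1, abs_of_pos hr]

lemma eq_or_eq_of_im_nonneg (h1 : 0 ≤ l1.im) (h2 : 0 ≤ l2.im) {μ : ℂ}
    (hμ : μ = l1 ∨ μ = conj l1 ∨ μ = l2 ∨ μ = conj l2) (him : 0 ≤ μ.im) : μ = l1 ∨ μ = l2 := by
  rcases hμ with rfl | rfl | rfl | rfl
  · exact Or.inl rfl
  · exact Or.inl (conj_eq_iff_im.2 (by simp at him; linarith))
  · exact Or.inr rfl
  · exact Or.inr (conj_eq_iff_im.2 (by simp at him; linarith))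

lemma existsUnique_spCase (h : ∃ n, SpCase l1 l2 n) : ∃! n, SpCase l1 l2 n :=
  let ⟨n, hn⟩ := h
  ⟨n, hn, fun _ hm => (caseIndex_eq_of_spCase hm).symm.trans (caseIndex_eq_of_spCase hn)⟩

end Classification

/-- Classification of the pair of substantial right eigenvalues of `P ∈ Sp(1,1)`:
exactly one of the seven listed possibilities holds. -/
theorem sp_substantial_classification (P : Matrix (Fin 2) (Fin 2) Hq)
    (hP : InSp P) (l1 l2 : ℂ)
    (h1 : l1.im = 0 ∨ 0 < l1.im) (h2 : l2.im = 0 ∨ 0 < l2.im)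
    (hchar : (chi P).charpoly =
      (X - C l1) * (X - C (starRingEnd ℂ l1)) * (X - C l2) * (X - C (starRingEnd ℂ l2))) :
    ∃! n : Fin 7,
      (![ (l1 = l2 ∧ (l1 = 1 ∨ l1 = -1)),
          ((l1 = 1 ∧ l2 = -1) ∨ (l1 = -1 ∧ l2 = 1)),
          (∃ r : ℝ, r ≠ -1 ∧ r ≠ 0 ∧ r ≠ 1 ∧
            ((l1 = (r : ℂ) ∧ l2 = (r : ℂ)⁻¹) ∨ (l1 = (r : ℂ)⁻¹ ∧ l2 = (r : ℂ)))),
          (∃ θ : ℝ, θ ∈ Set.Ioo 0 Real.pi ∧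
            (((l1 = 1 ∨ l1 = -1) ∧ l2 = Complex.exp (θ * Complex.I)) ∨
             ((l2 = 1 ∨ l2 = -1) ∧ l1 = Complex.exp (θ * Complex.I)))),
          (∃ θ : ℝ, θ ∈ Set.Ioo 0 Real.pi ∧
            l1 = Complex.exp (θ * Complex.I) ∧ l2 = Complex.exp (θ * Complex.I)),
          (∃ θ₁ θ₂ : ℝ, θ₁ ∈ Set.Ioo 0 Real.pi ∧ θ₂ ∈ Set.Ioo 0 Real.pi ∧ θ₁ ≠ θ₂ ∧
            l1 = Complex.exp (θ₁ * Complex.I) ∧ l2 = Complex.exp (θ₂ * Complex.I)),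
          (∃ r θ : ℝ, 0 < r ∧ r ≠ 1 ∧ θ ∈ Set.Ioo 0 Real.pi ∧
            ((l1 = r * Complex.exp (θ * Complex.I) ∧
              l2 = (r : ℂ)⁻¹ * Complex.exp (θ * Complex.I)) ∨
             (l1 = (r : ℂ)⁻¹ * Complex.exp (θ * Complex.I) ∧
              l2 = r * Complex.exp (θ * Complex.I)))) ] : Fin 7 → Prop) n := by
  show ∃! n, SpCase l1 l2 n
  have h1' : 0 ≤ l1.im := h1.elim ge_of_eq le_of_lt
  have h2' : 0 ≤ l2.im := h2.elim ge_of_eq le_of_lt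
  have hA : (chi P)ᴴ * chi Jmat * chi P = chi Jmat := by
    rw [← chi_conjTranspose, ← chi_mul, ← chi_mul, hP]
  have hJ : (chi Jmat).det ≠ 0 := by rw [det_chi_Jmat]; exact one_ne_zero
  have hroots : ∀ μ, (chi P).charpoly.IsRoot μ ↔
      μ = l1 ∨ μ = conj l1 ∨ μ = l2 ∨ μ = conj l2 := by
    intro μ
    simp [hchar, sub_eq_zero, or_assoc]
  have hne : ∀ μ, (chi P).charpoly.IsRoot μ → μ ≠ 0 := by
    rintro μ hμ rfl
    exact charpoly_not_isRoot_zero hJ hA hμ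
  have hinv : ∀ μ, (chi P).charpoly.IsRoot μ → 0 ≤ μ.im → (conj μ)⁻¹ = l1 ∨ (conj μ)⁻¹ = l2 :=
    fun μ hμ him => eq_or_eq_of_im_nonneg h1' h2'
      ((hroots _).1 (charpoly_isRoot_inv_conj hJ hA hμ)) (im_inv_conj_nonneg him)
  have hl1 := (hroots l1).2 (Or.inl rfl)
  have hl2 := (hroots l2).2 (Or.inr (Or.inr (Or.inl rfl)))
  exact existsUnique_spCase (exists_spCase h1' h2' (hne _ hl1) (hne _ hl2)
    (hinv _ hl1 h1') (hinv _ hl2 h2'))
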